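/- arXiv:math/0506187 — 3 statements merged into one kernel-verified Lean document; each statement's English description precedes it below -/
import Mathlib

section
/- For any k, ℓ ∈ ℕ_0 and any real c, the sum over r from 0 to k of (-1)^r C(2ℓ+c+1, 2ℓ-r) C(2ℓ-r, k-r) equals C(2ℓ+c+1, 2ℓ-k) C(c+k, k). -/
open Filter Real MeasureTheory

/-- Generalized binomial coefficient `C(x, m) = x(x-1)⋯(x-m+1)/m!` for `m ∈ ℕ₀`, `0` for `m < 0`. -/
noncomputable def gchoose (x : ℝ) (m : ℤ) : ℝ :=
  if 0 ≤ m then (∏ i ∈ Finset.range m.toNat, (x - (i : ℝ))) / (Nat.factorial m.toNat : ℝ) else 0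

/-- Generalized Laguerre polynomial `L_j^α(x) = Σ_{ℓ=0}^j ((-1)^ℓ/ℓ!) C(j+α, j-ℓ) x^ℓ`. -/
noncomputable def lagL (j : ℕ) (α : ℝ) : ℝ → ℝ :=
  fun x => ∑ l ∈ Finset.range (j + 1),
    ((-1 : ℝ) ^ l / (Nat.factorial l : ℝ)) * gchoose ((j : ℝ) + α) ((j : ℤ) - l) * x ^ l

noncomputable def gc (x : ℝ) (m : ℕ) : ℝ := (∏ i ∈ Finset.range m, (x - i)) / (m.factorial : ℝ)

lemma gchoose_natCast (x : ℝ) (m : ℕ) : gchoose x (m : ℤ) = gc x m := by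
  simp [gchoose, gc]

lemma gchoose_neg (x : ℝ) {m : ℤ} (h : m < 0) : gchoose x m = 0 := by
  simp [gchoose, not_le.mpr h]

lemma gc_nat_eq_zero {a b : ℕ} (h : a < b) : gc (a : ℝ) b = 0 := by
  unfold gc
  rw [Finset.prod_eq_zero (Finset.mem_range.mpr h) (by simp), zero_div]

lemma prod_desc (a b : ℕ) (h : b ≤ a) :
    (∏ i ∈ Finset.range b, ((a:ℝ) - i)) * (((a-b).factorial : ℕ) : ℝ) = (a.factorial : ℝ) := by
  induction b with
  | zero => simp
  | succ n ih =>
    have hn : n ≤ a := Nat.le_of_succ_le h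
    have h1 : a - n = (a - (n+1)) + 1 := by omega
    rw [Finset.prod_range_succ]
    have := ih hn
    rw [h1] at this
    rw [Nat.factorial_succ] at this
    push_cast at this ⊢
    have hc : (a : ℝ) - n = ((a - (n+1) : ℕ) : ℝ) + 1 := by
      have : ((a - (n+1) : ℕ) : ℝ) = (a : ℝ) - (n+1) := by
        push_cast [Nat.cast_sub h]; ring
      rw [this]; ring
    nlinarith [this, hc]

lemma trinomial (x : ℝ) (a b : ℕ) (h : b ≤ a) :
    gc x a * gc (a : ℝ) b = gc x (a-b) * gc (x - ((a-b : ℕ) : ℝ)) b := by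
  unfold gc
  have e : a - b + b = a := by omega
  have hsplit : (∏ i ∈ Finset.range a, (x - i))
      = (∏ i ∈ Finset.range (a-b), (x - i)) *
        (∏ i ∈ Finset.range b, (x - ((a-b : ℕ):ℝ) - i)) := by
    calc (∏ i ∈ Finset.range a, (x - i))
        = ∏ i ∈ Finset.range (a-b+b), (x - i) := by rw [e]
      _ = (∏ i ∈ Finset.range (a-b), (x - i)) *
            (∏ i ∈ Finset.range b, (x - (((a-b)+i : ℕ):ℝ))) := Finset.prod_range_add _ _ _
      _ = _ := by
          refine congrArg _ (Finset.prod_congr rfl fun i _ => ?_)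
          push_cast
          ring
  rw [hsplit]
  have hd := prod_desc a b h
  have f1 : ((a.factorial : ℕ) : ℝ) ≠ 0 := by positivity
  have f2 : (((a-b).factorial : ℕ) : ℝ) ≠ 0 := by positivity
  have f3 : ((b.factorial : ℕ) : ℝ) ≠ 0 := by positivity
  rw [div_mul_div_comm, div_mul_div_comm, div_eq_div_iff (by positivity) (by positivity)]
  linear_combination ((∏ i ∈ Finset.range (a-b), (x - i)) *
    (∏ i ∈ Finset.range b, (x - ((a-b : ℕ):ℝ) - i)) * ((b.factorial : ℕ) : ℝ)) * hd

lemma pascal (x : ℝ) (k : ℕ) : gc x (k+1) = gc (x-1) k + gc (x-1) (k+1) := by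
  unfold gc
  have h1 : (∏ i ∈ Finset.range (k+1), (x - i))
      = (∏ i ∈ Finset.range k, (x - 1 - i)) * x := by
    rw [Finset.prod_range_succ']
    congr 1
    · exact Finset.prod_congr rfl fun i _ => by push_cast; ring
    · simp
  have h2 : (∏ i ∈ Finset.range (k+1), (x - 1 - i))
      = (∏ i ∈ Finset.range k, (x - 1 - i)) * (x - 1 - k) := Finset.prod_range_succ _ _
  rw [h1, h2, Nat.factorial_succ]
  have f3 : ((k.factorial : ℕ) : ℝ) ≠ 0 := by positivity
  have f4 : ((k:ℝ) + 1) ≠ 0 := by positivity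
  push_cast
  field_simp
  ring

lemma alt (y : ℝ) (k : ℕ) :
    ∑ j ∈ Finset.range (k+1), (-1:ℝ)^j * gc y j = (-1)^k * gc (y-1) k := by
  induction k with
  | zero => simp [gc]
  | succ n ih =>
    rw [Finset.sum_range_succ, ih, pascal y n]
    ring

lemma neg_one_pow_sub (k i : ℕ) (h : i ≤ k) : (-1:ℝ)^(k-i) = (-1)^k * (-1)^i := by
  have h1 : (-1:ℝ)^k = (-1)^(k-i) * (-1)^i := by rw [← pow_add]; congr 1; omega
  have h2 : (-1:ℝ)^(i*2) = 1 := by rw [mul_comm, pow_mul]; norm_num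
  rw [h1]
  linear_combination (-(-1:ℝ)^(k-i)) * h2

lemma alt_rev (y : ℝ) (k : ℕ) :
    ∑ r ∈ Finset.range (k+1), (-1:ℝ)^r * gc y (k-r) = gc (y-1) k := by
  have h1 : ∀ r ∈ Finset.range (k+1), (-1:ℝ)^r * gc y (k-r)
      = (fun i => (-1:ℝ)^(k-i) * gc y i) (k+1-1-r) := by
    intro r hr
    have hr' : r ≤ k := Nat.lt_succ_iff.mp (Finset.mem_range.mp hr)
    simp only
    rw [show k+1-1-r = k-r from rfl, show k-(k-r) = r from by omega]
  have hrefl := Finset.sum_range_reflect (fun i => (-1:ℝ)^(k-i) * gc y i) (k+1)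
  rw [Finset.sum_congr rfl h1, hrefl]
  have h2 : ∀ i ∈ Finset.range (k+1), (-1:ℝ)^(k-i) * gc y i = (-1:ℝ)^k * ((-1)^i * gc y i) := by
    intro i hi
    rw [neg_one_pow_sub k i (Nat.lt_succ_iff.mp (Finset.mem_range.mp hi))]
    ring
  rw [Finset.sum_congr rfl h2, ← Finset.mul_sum, alt y k]
  have h3 : ((-1:ℝ)^k)^2 = 1 := by rw [← pow_mul, mul_comm, pow_mul]; norm_num
  linear_combination (gc (y-1) k) * h3

theorem alternating_gchoose_sum (k l : ℕ) (c : ℝ) :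
    ∑ r ∈ Finset.range (k + 1),
        (-1 : ℝ) ^ r * gchoose (2 * (l : ℝ) + c + 1) (2 * (l : ℤ) - (r : ℤ))
          * gchoose (2 * (l : ℝ) - (r : ℝ)) ((k : ℤ) - (r : ℤ))
      = gchoose (2 * (l : ℝ) + c + 1) (2 * (l : ℤ) - (k : ℤ)) * gchoose (c + (k : ℝ)) (k : ℤ) := by
  set x : ℝ := 2 * (l : ℝ) + c + 1 with hx
  by_cases hk : k ≤ 2 * l
  · -- main case
    have step : ∀ r ∈ Finset.range (k+1),
        (-1 : ℝ) ^ r * gchoose x (2 * (l : ℤ) - (r : ℤ))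
          * gchoose (2 * (l : ℝ) - (r : ℝ)) ((k : ℤ) - (r : ℤ))
        = gc x (2*l-k) * ((-1:ℝ)^r * gc (x - ((2*l-k : ℕ) : ℝ)) (k-r)) := by
      intro r hr
      have hr' : r ≤ k := Nat.lt_succ_iff.mp (Finset.mem_range.mp hr)
      have h1 : 2 * (l : ℤ) - (r : ℤ) = ((2*l - r : ℕ) : ℤ) := by
        rw [Nat.cast_sub (by omega)]; push_cast; ring
      have h2 : (k : ℤ) - (r : ℤ) = ((k - r : ℕ) : ℤ) := by
        rw [Nat.cast_sub hr']
      have h3 : 2 * (l : ℝ) - (r : ℝ) = ((2*l - r : ℕ) : ℝ) := by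
        rw [Nat.cast_sub (by omega)]; push_cast; ring
      rw [h1, h2, h3, gchoose_natCast, gchoose_natCast]
      have htr := trinomial x (2*l - r) (k - r) (by omega)
      rw [show 2*l - r - (k - r) = 2*l - k from by omega] at htr
      rw [mul_assoc, htr]
      ring
    rw [Finset.sum_congr rfl step, ← Finset.mul_sum, alt_rev]
    have hy : x - ((2*l-k : ℕ) : ℝ) - 1 = c + (k : ℝ) := by
      rw [Nat.cast_sub hk, hx]; push_cast; ring
    rw [hy]
    have h1 : 2 * (l : ℤ) - (k : ℤ) = ((2*l - k : ℕ) : ℤ) := by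
      rw [Nat.cast_sub hk]; push_cast; ring
    rw [h1, gchoose_natCast, gchoose_natCast]
  · -- degenerate case : both sides vanish
    push_neg at hk
    have hR : gchoose x (2 * (l : ℤ) - (k : ℤ)) = 0 := gchoose_neg _ (by omega)
    rw [hR, zero_mul]
    apply Finset.sum_eq_zero
    intro r hr
    by_cases hr2 : r ≤ 2*l
    · have h2 : (k : ℤ) - (r : ℤ) = ((k - r : ℕ) : ℤ) := by
        have hr' : r ≤ k := Nat.lt_succ_iff.mp (Finset.mem_range.mp hr)
        rw [Nat.cast_sub hr']
      have h3 : 2 * (l : ℝ) - (r : ℝ) = ((2*l - r : ℕ) : ℝ) := by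
        rw [Nat.cast_sub hr2]; push_cast; ring
      rw [h2, h3, gchoose_natCast, gc_nat_eq_zero (by omega), mul_zero]
    · rw [gchoose_neg x (show 2 * (l : ℤ) - (r : ℤ) < 0 from by omega), mul_zero, zero_mul]
end

section
/- For any c ∈ ℝ and ℓ ∈ ℕ_0, the sum a_k(2ℓ, c) := Σ_{p=0}^{2ℓ} C(p+c, p) C(p, k) satisfies the closed form a_k(2ℓ, c) = C(2ℓ+c+1, 2ℓ-k) C(c+k, k) for every k ∈ ℕ_0. -/
open Filter Real MeasureTheory

/-!
On natural lower indices `gchoose` is Mathlib's `Ring.choose`, so the identity can be proved in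
any binomial ring and for any upper limit `n` of summation, not only `n = 2ℓ`. Trinomial revision
turns the summand into `C(c+k, k) · C(c+k+j, j)` with `p = k + j` (the terms with `p < k` vanish),
and the parallel summation `∑_{j ≤ m} C(r+j, j) = C(r+m+1, m)`, which is Pascal's rule telescoped,
finishes the computation.
-/

open Finset

namespace Ring

variable {R : Type*} [NonAssocRing R] [Pow R ℕ] [BinomialRing R] [NatPowAssoc R]

theorem sum_range_choose_add_natCast (r : R) (m : ℕ) :
    ∑ j ∈ range (m + 1), choose (r + j) j = choose (r + m + 1) m := by
  induction m with
  | zero => simp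
  | succ m ih => rw [sum_range_succ, ih, Nat.cast_succ, ← add_assoc, ← choose_succ_succ]

theorem choose_add_mul_natCast_choose (r : R) (k j : ℕ) :
    choose (r + (k + j : ℕ)) (k + j) * ((k + j).choose k : R)
      = choose (r + (k + j : ℕ)) j * choose (r + k) k := by
  rw [← Nat.cast_comm, ← nsmul_eq_mul, Nat.choose_symm_add, Nat.cast_add, ← add_assoc,
    choose_add_smul_choose]

theorem sum_range_choose_mul_natCast_choose (r : R) (k m : ℕ) :
    ∑ p ∈ range (k + m + 1), choose (r + p) p * (p.choose k : R)
      = choose (r + (k + m : ℕ) + 1) m * choose (r + k) k := by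
  have below_k : ∑ p ∈ range k, choose (r + p) p * (p.choose k : R) = 0 :=
    sum_eq_zero fun p hp => by
      rw [Nat.choose_eq_zero_of_lt (mem_range.mp hp), Nat.cast_zero, mul_zero]
  rw [add_assoc, sum_range_add, below_k, zero_add]
  simp_rw [choose_add_mul_natCast_choose, Nat.cast_add, ← add_assoc]
  rw [← sum_mul, sum_range_choose_add_natCast]

end Ring

theorem gchoose_natCast_s5 (x : ℝ) (n : ℕ) : gchoose x n = Ring.choose x n := by
  rw [Ring.choose_eq_smul, ← Polynomial.aeval_eq_smeval, Polynomial.aeval_def,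
    ← Polynomial.eval_map, descPochhammer_map, descPochhammer_eval_eq_prod_range]
  simp [gchoose, div_eq_inv_mul]

theorem gchoose_of_neg (x : ℝ) {m : ℤ} (hm : m < 0) : gchoose x m = 0 := by
  simp [gchoose, hm]

theorem a_k_closed_form (c : ℝ) (l k : ℕ) :
    ∑ p ∈ Finset.range (2 * l + 1), gchoose ((p : ℝ) + c) (p : ℤ) * (Nat.choose p k : ℝ)
      = gchoose (2 * (l : ℝ) + c + 1) (2 * (l : ℤ) - (k : ℤ)) * gchoose (c + (k : ℝ)) (k : ℤ) := by
  rcases lt_or_ge (2 * l) k with hlt | hle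
  · rw [gchoose_of_neg _ (show 2 * (l : ℤ) - k < 0 by omega), zero_mul]
    exact sum_eq_zero fun p hp => by
      rw [Nat.choose_eq_zero_of_lt (by have := mem_range.mp hp; omega), Nat.cast_zero, mul_zero]
  · obtain ⟨m, hm⟩ := Nat.exists_eq_add_of_le hle
    have h_top : 2 * (l : ℝ) = ((k + m : ℕ) : ℝ) := by exact_mod_cast hm
    have h_bot : 2 * (l : ℤ) - (k : ℤ) = (m : ℤ) := by omega
    simp_rw [h_top, h_bot, gchoose_natCast_s5, hm, add_comm _ c]
    exact Ring.sum_range_choose_mul_natCast_choose c k m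
end

section
/- For 𝔞 = 0 and j ∈ ℕ: ∫_0^z e^{-x/2} (d/dx){L_{j+1}^0(x) - L_{j-1}^0(x)} dx = 2 e^{-z/2} {L_j^0(z) - L_{j-1}^0(z)} for all z ≥ 0. -/
/-!
For the ordinary Laguerre polynomials, `L_{n+1} - L_n` is an antiderivative of `-L_n`
(Pascal's rule on the coefficients). Hence the integrand is `-e^{-x/2} (L_j + L_{j-1})`, which
is also the derivative of `2 e^{-x/2} (L_j - L_{j-1})`; the latter vanishes at `0` because
every `L_n(0) = 1`.
-/

open Filter Real MeasureTheory

open Finset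

theorem gchoose_natCast_s15 (n k : ℕ) : gchoose n k = n.choose k := by
  rw [gchoose, if_pos (Int.natCast_nonneg k), Int.toNat_natCast,
    ← descPochhammer_eval_eq_prod_range, descPochhammer_eval_eq_descFactorial,
    Nat.descFactorial_eq_factorial_mul_choose, Nat.cast_mul,
    mul_div_cancel_left₀ _ (by positivity)]

noncomputable def laguerre (n : ℕ) (x : ℝ) : ℝ :=
  ∑ l ∈ range (n + 1), (-1) ^ l / (l.factorial : ℝ) * n.choose l * x ^ l

theorem lagL_zero (n : ℕ) : lagL n 0 = laguerre n := by
  funext x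
  refine sum_congr rfl fun l hl => ?_
  have hln : l ≤ n := Nat.lt_succ_iff.mp (mem_range.mp hl)
  rw [add_zero, ← Nat.cast_sub hln, gchoose_natCast_s15, Nat.choose_symm hln]

theorem laguerre_apply_zero (n : ℕ) : laguerre n 0 = 1 := by
  rw [laguerre, sum_range_succ']
  simp

theorem continuous_laguerre (n : ℕ) : Continuous (laguerre n) := by
  unfold laguerre
  fun_prop

theorem laguerre_succ_sub (n : ℕ) (x : ℝ) :
    laguerre (n + 1) x - laguerre n x =
      ∑ l ∈ range (n + 1), (-1) ^ (l + 1) / ((l + 1).factorial : ℝ) * n.choose l * x ^ (l + 1) := by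
  have hn : laguerre n x = 1 +
      ∑ l ∈ range (n + 1), (-1) ^ (l + 1) / ((l + 1).factorial : ℝ) * n.choose (l + 1) * x ^ (l + 1) := by
    rw [laguerre, sum_range_succ', sum_range_succ _ n, Nat.choose_succ_self]
    simp [add_comm]
  rw [hn, laguerre, sum_range_succ']
  simp only [Nat.choose_succ_succ, Nat.cast_add, mul_add, add_mul, sum_add_distrib,
    Nat.choose_zero_right, pow_zero, Nat.factorial_zero, Nat.cast_one, div_one, mul_one]
  ring

theorem hasDerivAt_laguerre_succ_sub (n : ℕ) (x : ℝ) :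
    HasDerivAt (fun y => laguerre (n + 1) y - laguerre n y) (-laguerre n x) x := by
  simp only [laguerre_succ_sub]
  refine (HasDerivAt.fun_sum fun l _ => (hasDerivAt_pow (l + 1) x).const_mul
    ((-1 : ℝ) ^ (l + 1) / ((l + 1).factorial : ℝ) * n.choose l)).congr_deriv ?_
  rw [laguerre, ← sum_neg_distrib]
  refine sum_congr rfl fun l _ => ?_
  rw [Nat.factorial_succ]
  push_cast
  field_simp
  ring

theorem deriv_laguerre_add_two_sub (n : ℕ) :
    deriv (fun y => laguerre (n + 1 + 1) y - laguerre n y) =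
      fun x => -(laguerre (n + 1) x + laguerre n x) := by
  funext x
  have h := (hasDerivAt_laguerre_succ_sub (n + 1) x).fun_add (hasDerivAt_laguerre_succ_sub n x)
  simp only [sub_add_sub_cancel, ← neg_add] at h
  exact h.deriv

theorem hasDerivAt_two_mul_exp_mul_laguerre_succ_sub (n : ℕ) (x : ℝ) :
    HasDerivAt (fun y => 2 * Real.exp (-y / 2) * (laguerre (n + 1) y - laguerre n y))
      (Real.exp (-x / 2) * -(laguerre (n + 1) x + laguerre n x)) x := by
  have hexp : HasDerivAt (fun y => Real.exp (-y / 2)) (Real.exp (-x / 2) * (-1 / 2)) x :=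
    ((hasDerivAt_neg x).div_const 2).exp
  refine ((hexp.const_mul 2).mul (hasDerivAt_laguerre_succ_sub n x)).congr_deriv ?_
  ring

theorem G_integral_formula_zero_param_general (j : ℕ) (hj : 1 ≤ j) (z : ℝ) :
    ∫ x in (0 : ℝ)..z, Real.exp (-x / 2) *
        deriv (fun y : ℝ => lagL (j + 1) 0 y - lagL (j - 1) 0 y) x
      = 2 * Real.exp (-z / 2) * (lagL j 0 z - lagL (j - 1) 0 z) := by
  obtain ⟨m, rfl⟩ := Nat.exists_eq_add_of_le' hj
  simp only [lagL_zero, Nat.add_sub_cancel, deriv_laguerre_add_two_sub]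
  have hcont : Continuous fun x => Real.exp (-x / 2) * -(laguerre (m + 1) x + laguerre m x) := by
    have := continuous_laguerre (m + 1)
    have := continuous_laguerre m
    fun_prop
  rw [intervalIntegral.integral_eq_sub_of_hasDerivAt
    (fun x _ => hasDerivAt_two_mul_exp_mul_laguerre_succ_sub m x) (hcont.intervalIntegrable 0 z)]
  simp [laguerre_apply_zero]

theorem G_integral_formula_zero_param (j : ℕ) (hj : 1 ≤ j) (z : ℝ) (hz : 0 ≤ z) :
    ∫ x in (0 : ℝ)..z, Real.exp (-x / 2) *
        deriv (fun y : ℝ => lagL (j + 1) 0 y - lagL (j - 1) 0 y) x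
      = 2 * Real.exp (-z / 2) * (lagL j 0 z - lagL (j - 1) 0 z) :=
  G_integral_formula_zero_param_general j hj z
end
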